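/- For every n ≥ 2, no proper subset of Δ_n is Lat-refuting for the variables of Fin n; that is, Δ_n is a minimal Lat-refuting set. -/

import Mathlib

/-- Lattice terms over variable type `α`: first-order terms in the language with exactly
two binary function symbols (meet and join). -/
inductive LatTerm (α : Type) : Type
  | var : α → LatTerm α
  | meet : LatTerm α → LatTerm α → LatTerm α
  | join : LatTerm α → LatTerm α → LatTerm α

namespace LatTerm

/-- Realization of a lattice term in a lattice `M` under a valuation `v`. -/
def realize {α M : Type} [Lattice M] (v : α → M) : LatTerm α → M
  | var a => v a
  | meet s t => realize v s ⊓ realize v t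
  | join s t => realize v s ⊔ realize v t

/-- Simultaneous substitution of lattice terms for variables. -/
def subst {α β : Type} (σ : α → LatTerm β) : LatTerm α → LatTerm β
  | var a => σ a
  | meet s t => meet (subst σ s) (subst σ t)
  | join s t => join (subst σ s) (subst σ t)

end LatTerm

/-- A lattice equation: a pair of lattice terms. -/
abbrev LatEq (α : Type) : Type := LatTerm α × LatTerm α

/-- The inequation `s ≤ t`, as the equation `s ⊓ t ≈ s`. -/
def leEq {α : Type} (s t : LatTerm α) : LatEq α := (s.meet t, s)

/-- Lat-validity: the two terms have equal realizations in every lattice under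
every valuation. -/
def LatValid {α : Type} (e : LatEq α) : Prop :=
  ∀ (M : Type) [Lattice M] (v : α → M), e.1.realize v = e.2.realize v

/-- The join, with a fixed bracketing, of `f 0, …, f m`. -/
def finJoin {α : Type} : {m : ℕ} → (Fin (m + 1) → LatTerm α) → LatTerm α
  | 0, f => f 0
  | _ + 1, f => LatTerm.join (finJoin fun k => f k.castSucc) (f (Fin.last _))

/-- The meet, with a fixed bracketing, of `f 0, …, f m`. -/
def finMeet {α : Type} : {m : ℕ} → (Fin (m + 1) → LatTerm α) → LatTerm α
  | 0, f => f 0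
  | _ + 1, f => LatTerm.meet (finMeet fun k => f k.castSucc) (f (Fin.last _))

/-- `Γ ⊢~_Lat Δ`. -/
def LatAdm {n : ℕ} (Γ Δ : Set (LatEq (Fin n))) : Prop :=
  ∀ σ : Fin n → LatTerm ℕ,
    (∀ e ∈ Γ, LatValid (e.1.subst σ, e.2.subst σ)) →
      ∃ d ∈ Δ, LatValid (d.1.subst σ, d.2.subst σ)

/-- `Δ` is Lat-refuting for the variables of `Fin n`. -/
def LatRefuting {n : ℕ} (Δ : Set (LatEq (Fin n))) : Prop :=
  ∀ e : LatEq (Fin n), ¬ LatValid e ↔ LatAdm {e} Δ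

/-- The set `Δ_n` (for `n = m + 2`) of the `2n` equations
`y_i ≤ ⊔_{j ≠ i} y_j` and `⊓_{j ≠ i} y_j ≤ y_i` for `i ∈ Fin n`. -/
def DeltaLat (m : ℕ) : Set (LatEq (Fin (m + 2))) :=
  { e | ∃ i : Fin (m + 2),
      e = leEq (.var i) (finJoin fun k : Fin (m + 1) => .var (i.succAbove k)) ∨
      e = leEq (finMeet fun k : Fin (m + 1) => .var (i.succAbove k)) (.var i) }


/-!
For `δ ∈ Δ_n` there is a substitution making `δ` valid but no other member of `Δ_n`: for
`δ = (y_i ≤ ⊔_{j ≠ i} y_j)` replace `y_i` by `y_i ⊓ ⊔_{j ≠ i} y_j`, and dually for the meet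
inequation. The other members are refuted in the two-element lattice `Prop`, where
`y_l ≤ ⊔_{j ≠ l} y_j` fails exactly at the indicator of `{l}` and `⊓_{j ≠ l} y_j ≤ y_l` exactly at
the indicator of its complement. Hence if `δ ∉ Δ' ⊂ Δ_n`, the invalid equation `δ` violates
`{δ} ⊢~_Lat Δ'`. For `n = 2` and `l ≠ i`, the equations `⊓_{j ≠ l} y_j ≤ y_l` and
`y_i ≤ ⊔_{j ≠ i} y_j` coincide; for `n ≥ 3` a third variable separates them.
-/

open Function

namespace LatTerm

variable {α β : Type}

theorem realize_subst {M : Type} [Lattice M] (σ : α → LatTerm β) (v : β → M) (t : LatTerm α) :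
    (t.subst σ).realize v = t.realize fun a => (σ a).realize v := by
  induction t with
  | var a => rfl
  | meet s t hs ht => simp only [subst, realize, hs, ht]
  | join s t hs ht => simp only [subst, realize, hs, ht]

theorem realize_update_var [DecidableEq α] {M : Type} [Lattice M] (a : α) (t : LatTerm α)
    (v : α → M) (b : α) : (update var a t b).realize v = update v a (t.realize v) b :=
  apply_update (fun _ t => t.realize v) var a t b

theorem subst_subst {γ : Type} (σ : α → LatTerm β) (ρ : β → LatTerm γ) (t : LatTerm α) :
    (t.subst σ).subst ρ = t.subst fun a => (σ a).subst ρ := by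
  induction t with
  | var a => rfl
  | meet s t hs ht => simp only [subst, hs, ht]
  | join s t hs ht => simp only [subst, hs, ht]

theorem subst_finJoin {m : ℕ} (σ : α → LatTerm β) (f : Fin (m + 1) → LatTerm α) :
    (finJoin f).subst σ = finJoin fun k => (f k).subst σ := by
  induction m with
  | zero => rfl
  | succ m ih => simp only [finJoin, subst, ih]

theorem subst_finMeet {m : ℕ} (σ : α → LatTerm β) (f : Fin (m + 1) → LatTerm α) :
    (finMeet f).subst σ = finMeet fun k => (f k).subst σ := by
  induction m with
  | zero => rfl
  | succ m ih => simp only [finMeet, subst, ih]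

theorem realize_finJoin_iff {m : ℕ} (v : α → Prop) (f : Fin (m + 1) → LatTerm α) :
    (finJoin f).realize v ↔ ∃ k, (f k).realize v := by
  induction m with
  | zero => simp [finJoin, Fin.exists_fin_one]
  | succ m ih => simp only [finJoin, realize, sup_Prop_eq, ih, Fin.exists_fin_succ']

theorem realize_finMeet_iff {m : ℕ} (v : α → Prop) (f : Fin (m + 1) → LatTerm α) :
    (finMeet f).realize v ↔ ∀ k, (f k).realize v := by
  induction m with
  | zero => simp [finMeet, Fin.forall_fin_one]
  | succ m ih => simp only [finMeet, realize, inf_Prop_eq, ih, Fin.forall_fin_succ']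

end LatTerm

open LatTerm

def LatEq.subst {α β : Type} (σ : α → LatTerm β) (e : LatEq α) : LatEq β :=
  (e.1.subst σ, e.2.subst σ)

section Validity

variable {α β : Type}

theorem latValid_leEq_iff {s t : LatTerm α} :
    LatValid (leEq s t) ↔ ∀ (M : Type) [Lattice M] (v : α → M), s.realize v ≤ t.realize v :=
  forall_congr' fun _ => forall_congr' fun _ => forall_congr' fun _ => inf_eq_left

theorem LatValid.subst {e : LatEq α} (h : LatValid e) (σ : α → LatTerm β) :
    LatValid (e.subst σ) := by
  intro M _ v
  simp only [LatEq.subst, realize_subst]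
  exact h M _

theorem LatValid.of_subst_var_comp {e : LatEq α} {f : α → β} (hf : Injective f)
    (h : LatValid (e.subst fun a => var (f a))) : LatValid e := by
  intro M _ v
  simpa only [LatEq.subst, realize_subst, realize, hf.extend_apply] using
    h M (extend f v fun _ => e.1.realize v)

theorem LatValid.imp_of_subst_update [DecidableEq α] {s t : LatTerm α} {a : α} {u : LatTerm α}
    (h : LatValid ((leEq s t).subst (update var a u))) (v : α → Prop) :
    s.realize (update v a (u.realize v)) → t.realize (update v a (u.realize v)) := by
  have hle := latValid_leEq_iff.1 h Prop v
  simp only [realize_subst, realize_update_var] at hle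
  exact hle

end Validity

theorem not_latRefuting_of_isolating {n : ℕ} {Δ Δ' : Set (LatEq (Fin n))} (hΔ' : Δ' ⊆ Δ)
    {δ : LatEq (Fin n)} (hδΔ' : δ ∉ Δ') (hδ : ¬ LatValid δ) (τ : Fin n → LatTerm (Fin n))
    (hτδ : LatValid (δ.subst τ)) (hτ : ∀ d ∈ Δ, LatValid (d.subst τ) → d = δ) :
    ¬ LatRefuting Δ' := by
  intro href
  -- `LatAdm` substitutes terms over `ℕ`; renaming along the injective `Fin.val` preserves validity.
  obtain ⟨d, hd, hdτ⟩ := (href δ).1 hδ (fun j => (τ j).subst fun a => var a.val) <| by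
    rintro e rfl
    simpa only [LatEq.subst, ← subst_subst] using hτδ.subst (fun a : Fin n => var a.val)
  refine hδΔ' (hτ d (hΔ' hd) (LatValid.of_subst_var_comp Fin.val_injective ?_) ▸ hd)
  simpa only [LatEq.subst, subst_subst] using hdτ

namespace DeltaLat

variable {m : ℕ}

def joinOthers (i : Fin (m + 2)) : LatTerm (Fin (m + 2)) :=
  finJoin fun k : Fin (m + 1) => .var (i.succAbove k)

def meetOthers (i : Fin (m + 2)) : LatTerm (Fin (m + 2)) :=
  finMeet fun k : Fin (m + 1) => .var (i.succAbove k)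

def leJoinEq (i : Fin (m + 2)) : LatEq (Fin (m + 2)) := leEq (.var i) (joinOthers i)

def meetLeEq (i : Fin (m + 2)) : LatEq (Fin (m + 2)) := leEq (meetOthers i) (.var i)

theorem mem_iff {e : LatEq (Fin (m + 2))} :
    e ∈ DeltaLat m ↔ ∃ i, e = leJoinEq i ∨ e = meetLeEq i :=
  Iff.rfl

theorem realize_joinOthers_iff (v : Fin (m + 2) → Prop) (i : Fin (m + 2)) :
    (joinOthers i).realize v ↔ ∃ j ≠ i, v j := by
  simp only [joinOthers, realize_finJoin_iff, realize]
  exact ⟨fun ⟨k, hk⟩ => ⟨_, i.succAbove_ne k, hk⟩, fun ⟨j, hj, hvj⟩ => by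
    obtain ⟨k, rfl⟩ := Fin.exists_succAbove_eq hj; exact ⟨k, hvj⟩⟩

theorem realize_meetOthers_iff (v : Fin (m + 2) → Prop) (i : Fin (m + 2)) :
    (meetOthers i).realize v ↔ ∀ j ≠ i, v j := by
  simp only [meetOthers, realize_finMeet_iff, realize]
  exact ⟨fun h j hj => by obtain ⟨k, rfl⟩ := Fin.exists_succAbove_eq hj; exact h k,
    fun h k => h _ (i.succAbove_ne k)⟩

theorem subst_update_joinOthers (i : Fin (m + 2)) (t : LatTerm (Fin (m + 2))) :
    (joinOthers i).subst (update var i t) = joinOthers i := by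
  simp only [joinOthers, subst_finJoin, subst, update_of_ne (i.succAbove_ne _)]

theorem subst_update_meetOthers (i : Fin (m + 2)) (t : LatTerm (Fin (m + 2))) :
    (meetOthers i).subst (update var i t) = meetOthers i := by
  simp only [meetOthers, subst_finMeet, subst, update_of_ne (i.succAbove_ne _)]

theorem meetLeEq_eq_leJoinEq {i l : Fin 2} (hl : l ≠ i) : meetLeEq l = leJoinEq i := by
  have hsucc : ∀ i l : Fin 2, l ≠ i → l.succAbove 0 = i := by decide
  simp only [meetLeEq, leJoinEq, meetOthers, joinOthers, finMeet, finJoin, hsucc i l hl,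
    hsucc l i hl.symm]

theorem latValid_leJoinEq_subst (i : Fin (m + 2)) :
    LatValid ((leJoinEq i).subst (update var i ((var i).meet (joinOthers i)))) := by
  show LatValid (leEq (update var i _ i) ((joinOthers i).subst _))
  rw [subst_update_joinOthers, update_self]
  exact latValid_leEq_iff.2 fun _ _ _ => inf_le_right

theorem latValid_meetLeEq_subst (i : Fin (m + 2)) :
    LatValid ((meetLeEq i).subst (update var i ((var i).join (meetOthers i)))) := by
  show LatValid (leEq ((meetOthers i).subst _) (update var i _ i))
  rw [subst_update_meetOthers, update_self]
  exact latValid_leEq_iff.2 fun _ _ _ => le_sup_right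

theorem eq_leJoinEq_of_latValid_subst {i : Fin (m + 2)} {d : LatEq (Fin (m + 2))}
    (hd : d ∈ DeltaLat m) (h : LatValid (d.subst (update var i ((var i).meet (joinOthers i))))) :
    d = leJoinEq i := by
  obtain ⟨l, rfl | rfl⟩ := mem_iff.1 hd <;> by_cases hl : l = i
  · rw [hl]
  · have himp := h.imp_of_subst_update (· = l)
    simp [realize, realize_joinOthers_iff, hl] at himp
  · have himp := h.imp_of_subst_update (· ≠ l)
    simp [realize, realize_joinOthers_iff, realize_meetOthers_iff, update_apply, hl] at himp
  · cases m with
    | zero => exact meetLeEq_eq_leJoinEq hl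
    | succ m =>
      have himp := h.imp_of_subst_update (· ≠ l)
      have hthird : ∃ j, j ≠ i ∧ j ≠ l := Fin.exists_ne_and_ne_of_two_lt i l (by omega)
      simp [realize, realize_joinOthers_iff, realize_meetOthers_iff, hl, hthird] at himp

theorem eq_meetLeEq_of_latValid_subst {i : Fin (m + 2)} {d : LatEq (Fin (m + 2))}
    (hd : d ∈ DeltaLat m) (h : LatValid (d.subst (update var i ((var i).join (meetOthers i))))) :
    d = meetLeEq i := by
  obtain ⟨l, rfl | rfl⟩ := mem_iff.1 hd <;> by_cases hl : l = i
  · have himp := h.imp_of_subst_update (· = l)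
    simp [realize, realize_joinOthers_iff, realize_meetOthers_iff, update_apply, hl] at himp
  · cases m with
    | zero => exact (meetLeEq_eq_leJoinEq (Ne.symm hl)).symm
    | succ m =>
      have himp := h.imp_of_subst_update (· = l)
      have hthird : ∃ j, j ≠ i ∧ j ≠ l := Fin.exists_ne_and_ne_of_two_lt i l (by omega)
      simp [realize, realize_joinOthers_iff, realize_meetOthers_iff, hl, hthird] at himp
  · rw [hl]
  · have himp := h.imp_of_subst_update (· ≠ l)
    simp [realize, realize_meetOthers_iff, hl] at himp

theorem not_latValid_of_mem {δ : LatEq (Fin (m + 2))} (hδ : δ ∈ DeltaLat m) : ¬ LatValid δ := by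
  obtain ⟨i, rfl | rfl⟩ := mem_iff.1 hδ <;> intro h
  · have hle := latValid_leEq_iff.1 h Prop (· = i)
    simp [realize, realize_joinOthers_iff] at hle
  · have hle := latValid_leEq_iff.1 h Prop (· ≠ i)
    simp [realize, realize_meetOthers_iff] at hle

theorem exists_isolating_subst {δ : LatEq (Fin (m + 2))} (hδ : δ ∈ DeltaLat m) :
    ∃ τ : Fin (m + 2) → LatTerm (Fin (m + 2)),
      LatValid (δ.subst τ) ∧ ∀ d ∈ DeltaLat m, LatValid (d.subst τ) → d = δ := by
  obtain ⟨i, rfl | rfl⟩ := mem_iff.1 hδ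
  · exact ⟨_, latValid_leJoinEq_subst i, fun _ => eq_leJoinEq_of_latValid_subst⟩
  · exact ⟨_, latValid_meetLeEq_subst i, fun _ => eq_meetLeEq_of_latValid_subst⟩

end DeltaLat

theorem stmt5 (m : ℕ) (Δ' : Set (LatEq (Fin (m + 2)))) (h : Δ' ⊂ DeltaLat m) :
    ¬ LatRefuting Δ' := by
  obtain ⟨δ, hδ, hδΔ'⟩ := Set.exists_of_ssubset h
  obtain ⟨τ, hτδ, hτ⟩ := DeltaLat.exists_isolating_subst hδ
  exact not_latRefuting_of_isolating h.subset hδΔ' (DeltaLat.not_latValid_of_mem hδ) τ hτδ hτ
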